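/- arXiv:2603.18322 — 5 statements merged into one kernel-verified Lean document; each statement's English description precedes it below -/
import Mathlib

section
/- Let s be a prime power, let f ∈ F_s[X] have degree t with no roots in F_s, let G = (F_s[X]/(f))^*, and define Ψ(S) = ∏_{a ∈ F_s} (ξ-a)^{S(a)} for a multiset S over F_s. For each c ∈ G, the code C = {S ∈ S_{n,s} : Ψ(S) = c} corrects t deletions: if S_1, S_2 ∈ C and there exist multisets E_1, E_2 with |E_1| = |E_2| ≤ t and S_1 \ E_1 = S_2 \ E_2 with |E_1| = |E_2|, where E_i ≤ S_i coordinatewise, then S_1 = S_2. -/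
/-!
Write `Sᵢ = D + Eᵢ`, where `D` is the received multiset. As `f` has no roots in `F`, it is
coprime to `Ψ(D)`, so equal syndromes force `f ∣ Ψ(E₁) - Ψ(E₂)`. Both `Ψ(Eᵢ)` are monic of the
same degree `|Eᵢ| ≤ deg f`, so their difference has degree `< deg f` and vanishes. Finally `Eᵢ` is
read off `Ψ(Eᵢ)` as its multiset of roots.
-/

open Polynomial

def simplex (n q : ℕ) : Finset (Fin q → ℕ) := Finset.Nat.antidiagonalTuple q n

namespace Polynomial

variable {R : Type*} [CommRing R]

theorem monic_prod_X_sub_C_pow {ι : Type*} [Fintype ι] (x : ι → R) (E : ι → ℕ) :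
    (∏ i, (X - C (x i)) ^ E i).Monic :=
  monic_prod_of_monic _ _ fun i _ => (monic_X_sub_C (x i)).pow _

theorem natDegree_prod_X_sub_C_pow [Nontrivial R] {ι : Type*} [Fintype ι] (x : ι → R)
    (E : ι → ℕ) : (∏ i, (X - C (x i)) ^ E i).natDegree = ∑ i, E i := by
  rw [natDegree_prod_of_monic _ _ fun i _ => (monic_X_sub_C (x i)).pow _]
  simp [(monic_X_sub_C _).natDegree_pow]

theorem Monic.eq_of_dvd_sub [IsDomain R] {p q f : R[X]} (hp : p.Monic) (hq : q.Monic)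
    (hpq : p.natDegree = q.natDegree) (hpf : p.natDegree ≤ f.natDegree) (hdvd : f ∣ p - q) :
    p = q := by
  by_contra hne
  have hsub : p - q ≠ 0 := sub_ne_zero.2 hne
  have hdeg : p.degree = q.degree := by
    rw [degree_eq_natDegree hp.ne_zero, degree_eq_natDegree hq.ne_zero, hpq]
  have hlt : (p - q).natDegree < p.natDegree := natDegree_lt_natDegree hsub <|
    degree_sub_lt_left hdeg hp.ne_zero (by rw [hp.leadingCoeff, hq.leadingCoeff])
  have := natDegree_le_of_dvd hdvd hsub
  omega

section Domain

variable [IsDomain R] [Fintype R]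

theorem count_roots_prod_X_sub_C_pow [DecidableEq R] (E : R → ℕ) (b : R) :
    (∏ a, (X - C a) ^ E a).roots.count b = E b := by
  rw [roots_prod _ _ (Finset.prod_ne_zero_iff.2 fun a _ => pow_ne_zero _ (X_sub_C_ne_zero a)),
    Multiset.count_bind]
  simp [Multiset.count_singleton]

theorem prod_X_sub_C_pow_injective :
    Function.Injective fun E : R → ℕ => ∏ a, (X - C a) ^ E a := by
  classical
  intro E₁ E₂ h
  funext b
  rw [← count_roots_prod_X_sub_C_pow E₁, ← count_roots_prod_X_sub_C_pow E₂]
  exact congrArg (fun p => p.roots.count b) h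

end Domain

theorem isCoprime_prod_X_sub_C_pow {K : Type*} [Field K] [Fintype K] {f : K[X]}
    (hf : ∀ a, ¬ f.IsRoot a) (E : K → ℕ) : IsCoprime f (∏ a, (X - C a) ^ E a) :=
  IsCoprime.prod_right fun a _ =>
    ((irreducible_X_sub_C a).coprime_iff_not_dvd.2 (dvd_iff_isRoot.not.2 (hf a))).symm.pow_right

end Polynomial

theorem affine_polynomial_code_corrects_deletions_general
    (F : Type*) [Field F] [Fintype F] (t : ℕ) (f : F[X])
    (hdeg : f.natDegree = t) (hroots : ∀ a : F, f.eval a ≠ 0)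
    (c : F[X] ⧸ Ideal.span {f})
    (S₁ S₂ : F → ℕ)
    (hc₁ : Ideal.Quotient.mk (Ideal.span {f}) (∏ a : F, (X - C a) ^ S₁ a) = c)
    (hc₂ : Ideal.Quotient.mk (Ideal.span {f}) (∏ a : F, (X - C a) ^ S₂ a) = c)
    (E₁ E₂ : F → ℕ) (hE₁ : ∀ a, E₁ a ≤ S₁ a) (hE₂ : ∀ a, E₂ a ≤ S₂ a)
    (hcard : ∑ a, E₁ a = ∑ a, E₂ a) (hle : ∑ a, E₁ a ≤ t)
    (hrec : ∀ a, S₁ a - E₁ a = S₂ a - E₂ a) :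
    S₁ = S₂ := by
  set D : F → ℕ := fun a => S₁ a - E₁ a
  have hS₁ : S₁ = D + E₁ := funext fun a => (Nat.sub_add_cancel (hE₁ a)).symm
  have hS₂ : S₂ = D + E₂ := funext fun a => by simp [D, hrec a, Nat.sub_add_cancel (hE₂ a)]
  have hsyndrome := hc₁.trans hc₂.symm
  simp only [hS₁, hS₂, Pi.add_apply, pow_add, Finset.prod_mul_distrib, Ideal.Quotient.eq,
    Ideal.mem_span_singleton, ← mul_sub] at hsyndrome
  have hE : E₁ = E₂ := prod_X_sub_C_pow_injective <|
    (monic_prod_X_sub_C_pow _ E₁).eq_of_dvd_sub (monic_prod_X_sub_C_pow _ E₂)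
      (by rw [natDegree_prod_X_sub_C_pow, natDegree_prod_X_sub_C_pow, hcard])
      (by rw [natDegree_prod_X_sub_C_pow, hdeg]; exact hle)
      ((isCoprime_prod_X_sub_C_pow hroots D).dvd_of_dvd_mul_left hsyndrome)
  rw [hS₁, hS₂, hE]

/-- The affine polynomial Sidon-type code corrects `t` deletions: two codewords
of the same syndrome class that give the same received multiset after at most
`t` deletions each must coincide. -/
theorem affine_polynomial_code_corrects_deletions
    (F : Type*) [Field F] [Fintype F] (n t : ℕ) (f : F[X])
    (hdeg : f.natDegree = t) (hroots : ∀ a : F, f.eval a ≠ 0)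
    (c : F[X] ⧸ Ideal.span {f})
    (S₁ S₂ : F → ℕ) (hS₁ : ∑ a, S₁ a = n) (hS₂ : ∑ a, S₂ a = n)
    (hc₁ : Ideal.Quotient.mk (Ideal.span {f}) (∏ a : F, (X - C a) ^ S₁ a) = c)
    (hc₂ : Ideal.Quotient.mk (Ideal.span {f}) (∏ a : F, (X - C a) ^ S₂ a) = c)
    (E₁ E₂ : F → ℕ) (hE₁ : ∀ a, E₁ a ≤ S₁ a) (hE₂ : ∀ a, E₂ a ≤ S₂ a)
    (hcard : ∑ a, E₁ a = ∑ a, E₂ a) (hle : ∑ a, E₁ a ≤ t)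
    (hrec : ∀ a, S₁ a - E₁ a = S₂ a - E₂ a) :
    S₁ = S₂ :=
  affine_polynomial_code_corrects_deletions_general F t f hdeg hroots c S₁ S₂ hc₁ hc₂ E₁ E₂ hE₁ hE₂
    hcard hle hrec
end

section
/- For a center S ∈ S_{n,q} with multiplicity vector x, the map T ↦ x_T - x_S is a bijection from the deletion ball B_r(S) = {T ∈ S_{n,q} : d(S,T) ≤ r} to the set of integer vectors z ∈ ℤ^q satisfying Σ_i z_i = 0, Σ_i max(z_i, 0) ≤ r, and max(-z_i, 0) ≤ x_i for all i. -/
/-- Deletion distance between multiplicity vectors (equal to `n - |S ∩ T|`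
on the simplex). -/
def delDist {q : ℕ} (x y : Fin q → ℕ) : ℕ := ∑ i, (x i - y i)

/-- The radius-`r` deletion ball around `x` in `S_{n,q}`. -/
def ball (n q r : ℕ) (x : Fin q → ℕ) : Finset (Fin q → ℕ) :=
  (simplex n q).filter (fun y => delDist x y ≤ r)

lemma mem_simplex_iff {n q : ℕ} (x : Fin q → ℕ) :
    x ∈ simplex n q ↔ ∑ i, x i = n := by
  simp [simplex, Finset.Nat.mem_antidiagonalTuple]

lemma sum_pos_eq_sum_neg {q : ℕ} (z : Fin q → ℤ) (h : ∑ i, z i = 0) :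
    ∑ i, max (z i) 0 = ∑ i, max (-z i) 0 := by
  have : ∑ i, (max (z i) 0 - max (-z i) 0) = 0 := by
    rw [show (fun i => max (z i) 0 - max (-z i) 0) = z from funext fun i => by omega] at *
    · exact h
  have := Finset.sum_sub_distrib (f := fun i => max (z i) 0)
    (g := fun i => max (-z i) 0) (s := Finset.univ)
  omega

/-- The map `T ↦ x_T - x_S` is a bijection from the deletion ball `B_r(S)` to
the set of zero-sum integer vectors with total positive part at most `r` and
negative part bounded coordinatewise by the center. -/
theorem ball_bijection (n q r : ℕ) (x : Fin q → ℕ) (hx : x ∈ simplex n q) :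
    Set.BijOn (fun y : Fin q → ℕ => fun i => (y i : ℤ) - (x i : ℤ))
      (ball n q r x : Set (Fin q → ℕ))
      {z : Fin q → ℤ | ∑ i, z i = 0 ∧ ∑ i, max (z i) 0 ≤ (r : ℤ) ∧
        ∀ i, max (-z i) 0 ≤ (x i : ℤ)} := by
  rw [mem_simplex_iff] at hx
  refine ⟨?_, ?_, ?_⟩
  · intro y hy
    simp only [ball, Finset.coe_filter, Set.mem_setOf_eq] at hy
    obtain ⟨hys, hyd⟩ := hy
    rw [mem_simplex_iff] at hys
    have hsum : ∑ i, ((y i : ℤ) - (x i : ℤ)) = 0 := by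
      rw [Finset.sum_sub_distrib, ← Nat.cast_sum, ← Nat.cast_sum, hys, hx]
      ring
    have hneg : ∀ i, max (-(((y i : ℤ)) - (x i : ℤ))) 0 = ((x i - y i : ℕ) : ℤ) := by
      intro i
      omega
    refine ⟨hsum, ?_, ?_⟩
    · rw [sum_pos_eq_sum_neg _ hsum]
      calc ∑ i, max (-((y i : ℤ) - (x i : ℤ))) 0
          = ∑ i, ((x i - y i : ℕ) : ℤ) := by simp_rw [hneg]
        _ ≤ (r : ℤ) := by rw [← Nat.cast_sum]; exact_mod_cast hyd
    · intro i
      rw [hneg i]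
      exact_mod_cast Nat.sub_le _ _
  · intro a _ b _ hab
    funext i
    have := congrFun hab i
    simp only at this
    omega
  · intro z hz
    obtain ⟨h0, hr, hb⟩ := hz
    refine ⟨fun i => (z i + x i).toNat, ?_, ?_⟩
    · have hcast : ∀ i, (((z i + x i).toNat : ℤ)) = z i + x i := by
        intro i
        have := hb i
        omega
      simp only [ball, Finset.coe_filter, Set.mem_setOf_eq, mem_simplex_iff]
      constructor
      · have : ∑ i, (((z i + x i).toNat : ℤ)) = (n : ℤ) := by
          simp_rw [hcast, Finset.sum_add_distrib, h0]
          rw [zero_add, ← Nat.cast_sum, hx]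
        rw [← Nat.cast_sum] at this
        exact_mod_cast this
      · have : ∑ i, ((x i - (z i + x i).toNat : ℕ) : ℤ) ≤ (r : ℤ) := by
          calc ∑ i, ((x i - (z i + x i).toNat : ℕ) : ℤ)
              = ∑ i, max (-z i) 0 := by
                refine Finset.sum_congr rfl fun i _ => ?_
                have h1 := hcast i
                have h2 := hb i
                omega
            _ = ∑ i, max (z i) 0 := (sum_pos_eq_sum_neg _ h0).symm
            _ ≤ (r : ℤ) := hr
        rw [← Nat.cast_sum] at this
        exact_mod_cast this
    · funext i
      have := hb i
      simp only
      omega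
end

section
/- If the center S ∈ S_{n,q} satisfies x_i ≥ r for all coordinates i, then Δ_r(S) = S_{q-1}(r,r), and hence |B_r(S)| = |S_{q-1}(r,r)|. -/
/-- The ideal difference set `S_{q-1}(r,r)` of zero-sum integer vectors with
positive and negative part each at most `r`. -/
noncomputable def idealSet (q r : ℕ) : Finset (Fin q → ℤ) :=
  (Fintype.piFinset (fun _ : Fin q => Finset.Icc (-(r : ℤ)) (r : ℤ))).filter
    (fun z => ∑ i, z i = 0 ∧ ∑ i, max (z i) 0 ≤ (r : ℤ) ∧ ∑ i, max (-z i) 0 ≤ (r : ℤ))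

/-!
The translation `y ↦ y - x` is injective, so everything is about its image. For `y` in the
simplex the difference `y - x` sums to zero and its negative part is exactly `delDist x y`;
a zero-sum vector has equal positive and negative parts, each of which bounds every
coordinate, so `idealSet q r` is just the zero-sum vectors with negative part at most `r`.
Conversely such a `z` has all coordinates `≥ -r`, so when every `x i ≥ r` the point `x + z`
is again a multiplicity vector, lying in the ball.
-/

open Finset

lemma sum_max_neg_eq_sum_max_of_sum_eq_zero {ι : Type*} (s : Finset ι) {z : ι → ℤ}
    (hz : ∑ i ∈ s, z i = 0) : ∑ i ∈ s, max (-z i) 0 = ∑ i ∈ s, max (z i) 0 := by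
  have hsplit : ∀ i ∈ s, max (z i) 0 = z i + max (-z i) 0 := fun i _ => by omega
  rw [sum_congr rfl hsplit, sum_add_distrib, hz, zero_add]

lemma le_sum_max_zero {ι : Type*} [Fintype ι] (f : ι → ℤ) (i : ι) :
    max (f i) 0 ≤ ∑ j, max (f j) 0 :=
  single_le_sum (f := fun j => max (f j) 0) (fun _ _ => le_max_right _ _) (mem_univ i)

lemma mem_idealSet_iff {q r : ℕ} {z : Fin q → ℤ} :
    z ∈ idealSet q r ↔ ∑ i, z i = 0 ∧ ∑ i, max (-z i) 0 ≤ r := by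
  simp only [idealSet, mem_filter, Fintype.mem_piFinset, mem_Icc]
  constructor
  · rintro ⟨-, hz, -, hneg⟩
    exact ⟨hz, hneg⟩
  · rintro ⟨hz, hneg⟩
    have hpos : ∑ i, max (z i) 0 ≤ r := sum_max_neg_eq_sum_max_of_sum_eq_zero univ hz ▸ hneg
    refine ⟨fun i => ⟨?_, ?_⟩, hz, hpos, hneg⟩
    · have := le_sum_max_zero (fun j => -z j) i
      omega
    · have := le_sum_max_zero z i
      omega

lemma mem_ball_iff {n q r : ℕ} {x y : Fin q → ℕ} :
    y ∈ ball n q r x ↔ ∑ i, y i = n ∧ delDist x y ≤ r := by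
  simp only [ball, simplex, mem_filter, Nat.mem_antidiagonalTuple]

lemma natCast_delDist {q : ℕ} (x y : Fin q → ℕ) :
    (delDist x y : ℤ) = ∑ i, max (-((y i : ℤ) - x i)) 0 := by
  rw [delDist, Nat.cast_sum]
  exact sum_congr rfl fun i _ => by omega

lemma sub_mem_idealSet {n q r : ℕ} {x y : Fin q → ℕ} (hx : x ∈ simplex n q)
    (hy : y ∈ ball n q r x) : (fun i => (y i : ℤ) - x i) ∈ idealSet q r := by
  rw [simplex, Nat.mem_antidiagonalTuple] at hx
  obtain ⟨hyn, hdist⟩ := mem_ball_iff.mp hy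
  refine mem_idealSet_iff.mpr ⟨?_, ?_⟩
  · rw [sum_sub_distrib, ← Nat.cast_sum, ← Nat.cast_sum, hyn, hx, sub_self]
  · rw [← natCast_delDist]
    exact_mod_cast hdist

lemma exists_mem_ball_sub_eq {n q r : ℕ} {x : Fin q → ℕ} (hx : x ∈ simplex n q)
    (hint : ∀ i, r ≤ x i) {z : Fin q → ℤ} (hz : z ∈ idealSet q r) :
    ∃ y ∈ ball n q r x, (fun i => (y i : ℤ) - x i) = z := by
  rw [simplex, Nat.mem_antidiagonalTuple] at hx
  have hbox : ∀ i, -(r : ℤ) ≤ z i := fun i => by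
    simp only [idealSet, mem_filter, Fintype.mem_piFinset, mem_Icc] at hz
    exact (hz.1 i).1
  obtain ⟨hzero, hneg⟩ := mem_idealSet_iff.mp hz
  set y : Fin q → ℕ := fun i => ((x i : ℤ) + z i).toNat
  have hy : ∀ i, (y i : ℤ) = x i + z i := fun i => by
    have := hint i
    have := hbox i
    exact Int.toNat_of_nonneg (by omega)
  have hyz : (fun i => (y i : ℤ) - x i) = z := funext fun i => by rw [hy]; ring
  refine ⟨y, mem_ball_iff.mpr ⟨?_, ?_⟩, hyz⟩
  · have : ((∑ i, y i : ℕ) : ℤ) = n := by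
      simp only [Nat.cast_sum, hy, sum_add_distrib, hzero, add_zero, ← hx]
    exact_mod_cast this
  · have : (delDist x y : ℤ) ≤ r := by
      simpa only [natCast_delDist, hy, add_sub_cancel_left] using hneg
    exact_mod_cast this

/-- For interior centers (all multiplicities at least `r`), the difference set
of the radius-`r` ball equals the ideal set `S_{q-1}(r,r)`, and the ball attains
the ideal cardinality. -/
theorem interior_ball_eq_idealSet (n q r : ℕ) (x : Fin q → ℕ)
    (hx : x ∈ simplex n q) (hint : ∀ i, r ≤ x i) :
    (ball n q r x).image (fun y => fun i => (y i : ℤ) - (x i : ℤ)) = idealSet q r ∧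
    (ball n q r x).card = (idealSet q r).card := by
  have himage : (ball n q r x).image (fun y => fun i => (y i : ℤ) - (x i : ℤ)) =
      idealSet q r := by
    ext z
    rw [mem_image]
    exact ⟨fun ⟨y, hy, hyz⟩ => hyz ▸ sub_mem_idealSet hx hy, exists_mem_ball_sub_eq hx hint⟩
  refine ⟨himage, ?_⟩
  rw [← himage, card_image_of_injective]
  intro a b hab
  funext i
  have : (a i : ℤ) - x i = b i - x i := congrFun hab i
  omega
end

section
/- For every n, q, and radius 0 ≤ r ≤ n, and every center S ∈ S_{n,q}, the radius-r deletion ball satisfies |B_r(S)| ≥ binomial(r+q-1, q-1); that is, extreme centers minimize the deletion ball size. -/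
open Finset

theorem Finset.card_piAntidiag_univ_nat {ι : Type*} [Fintype ι] [DecidableEq ι] (n : ℕ) :
    #(piAntidiag (univ : Finset ι) n) = (Fintype.card ι + n - 1).choose n := by
  rw [← map_sym_eq_piAntidiag, card_map, sym_univ, card_univ, Sym.card_sym_eq_choose]

theorem exists_le_sum_eq_of_le_sum {ι : Type*} [Fintype ι] {x : ι → ℕ} {r : ℕ}
    (hr : r ≤ ∑ i, x i) : ∃ d ≤ x, ∑ i, d i = r := by
  classical
  induction r with
  | zero => exact ⟨0, zero_le, by simp⟩
  | succ r ih =>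
    obtain ⟨d, hdx, hd⟩ := ih (by omega)
    obtain ⟨i, -, hi⟩ := exists_lt_of_sum_lt (hd ▸ hr : ∑ j, d j < ∑ j, x j)
    refine ⟨d + Pi.single i 1, fun j => ?_, ?_⟩
    · rcases eq_or_ne j i with rfl | hj
      · simpa using hi
      · simpa [hj] using hdx j
    · simp only [Pi.add_apply, sum_add_distrib, hd, sum_pi_single', mem_univ, if_true]

theorem mem_simplex {n q : ℕ} {x : Fin q → ℕ} : x ∈ simplex n q ↔ ∑ i, x i = n :=
  Nat.mem_antidiagonalTuple

theorem card_simplex (r q : ℕ) (hq : 1 ≤ q) :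
    #(simplex r q) = (r + q - 1).choose (q - 1) := by
  obtain ⟨q, rfl⟩ := Nat.exists_eq_add_of_le' hq
  rw [simplex, ← piAntidiag_univ_fin_eq_antidiagonalTuple, card_piAntidiag_univ_nat,
    Fintype.card_fin, show q + 1 + r - 1 = q + r by omega, show r + (q + 1) - 1 = q + r by omega]
  exact Nat.choose_symm_add.symm

theorem delDist_le_sum_of_le_add {q : ℕ} {x y d : Fin q → ℕ} (h : x ≤ y + d) :
    delDist x y ≤ ∑ i, d i :=
  sum_le_sum fun i _ => tsub_le_iff_left.mpr (h i)

theorem tsub_add_mem_ball {n q r : ℕ} {x d z : Fin q → ℕ} (hx : x ∈ simplex n q) (hdx : d ≤ x)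
    (hd : ∑ i, d i = r) (hz : z ∈ simplex r q) : x - d + z ∈ ball n q r x := by
  rw [mem_simplex] at hx hz
  refine mem_filter.mpr ⟨mem_simplex.mpr ?_, delDist_le_sum_of_le_add ?_ |>.trans hd.le⟩
  · have hrn : r ≤ n := hx ▸ hd ▸ sum_le_sum fun i _ => hdx i
    simp only [Pi.add_apply, Pi.sub_apply, sum_add_distrib, sum_tsub_distrib _ fun i _ => hdx i,
      hx, hd, hz]
    omega
  · intro i
    simp only [Pi.add_apply, Pi.sub_apply]
    omega

theorem card_simplex_le_card_ball {n q r : ℕ} (hr : r ≤ n) {x : Fin q → ℕ}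
    (hx : x ∈ simplex n q) : #(simplex r q) ≤ #(ball n q r x) := by
  obtain ⟨d, hdx, hd⟩ := exists_le_sum_eq_of_le_sum (mem_simplex.mp hx ▸ hr)
  exact card_le_card_of_injOn (x - d + ·) (fun z hz => tsub_add_mem_ball hx hdx hd hz)
    (add_right_injective _).injOn

/-- Extreme centers minimize deletion balls: every radius-`r` ball in `S_{n,q}`
has size at least `binomial (r+q-1) (q-1)`. -/
theorem ball_card_ge_extreme (n q r : ℕ) (hq : 1 ≤ q) (hr : r ≤ n)
    (x : Fin q → ℕ) (hx : x ∈ simplex n q) :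
    (r + q - 1).choose (q - 1) ≤ (ball n q r x).card :=
  card_simplex r q hq ▸ card_simplex_le_card_ball hr hx
end

section
/- For every n, q ≥ 2, and 0 ≤ m ≤ n, the number A_{n,q}(m) of ordered pairs (S,T) ∈ S_{n,q}² with deletion distance exactly m equals c_{q,m} · binomial(n-m+q-1, q-1), where c_{q,m} = Σ_{j=0}^{min(m,q-1)} binomial(q-1,j)² · binomial(m-j+q-2, q-2) (with the convention c_{q,0} = 1). -/
/-!
Splitting off the common part `x ⊓ y`, a pair `(x, y)` of compositions of `n` at distance `m` is
the same as a composition `x ⊓ y` of `n - m` together with the pair `(x - y, y - x)` of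
compositions of `m` with disjoint supports. A composition of `m` with support a fixed `s`-set is a
composition of `m - s` supported there (subtract `1` on the set), and its partner is any
composition of `m` supported on the other `q - s` coordinates. Pascal's rule
`C(q, s) = C(q-1, s) + C(q-1, s-1)` regroups the resulting sum over `s`, and a factorial identity
merges the two terms of index `j` into `C(q-1, j) · C(m-j+q-2, q-2)`.
-/

open Finset
open scoped Nat

/-- The number of pairs `(a, b)` of compositions of `m` into `r` parts such that the support of
`a` is a fixed `s`-set and `b` vanishes on it. -/
def disjointPairsOverSupport (r m s : ℕ) : ℕ :=
  (if s ≤ m then s.multichoose (m - s) else 0) * (r - s).multichoose m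

section
variable {ι : Type*} [DecidableEq ι]

lemma Finset.card_piAntidiag_nat_eq_multichoose (s : Finset ι) (n : ℕ) :
    #(piAntidiag s n) = (#s).multichoose n := by
  rw [← card_finsuppAntidiag_nat_eq_multichoose, finsuppAntidiag, card_map, card_attach]

variable [Fintype ι]

lemma card_filter_piAntidiag_support_eq (s : Finset ι) (n : ℕ) :
    #{f ∈ piAntidiag univ n | ({i | f i ≠ 0} : Finset ι) = s}
      = if #s ≤ n then (#s).multichoose (n - #s) else 0 := by
  set e : ι → ℕ := fun i => if i ∈ s then 1 else 0
  have he : ∑ i, e i = #s := by simp [e]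
  have hmem (f : ι → ℕ) :
      f ∈ {f ∈ piAntidiag (univ : Finset ι) n | ({i | f i ≠ 0} : Finset ι) = s}
        ↔ ∑ i, f i = n ∧ ∀ i, f i ≠ 0 ↔ i ∈ s := by
    simp [Finset.ext_iff]
  have hle (f : ι → ℕ) (hf : ∀ i, f i ≠ 0 ↔ i ∈ s) : e ≤ f := fun i => by
    by_cases hi : i ∈ s
    · simpa [e, hi, Nat.one_le_iff_ne_zero] using (hf i).2 hi
    · simp [e, hi]
  split_ifs with hs
  · rw [← card_piAntidiag_nat_eq_multichoose]
    refine card_nbij' (· - e) (· + e) (fun f hf => ?_) (fun g hg => ?_) (fun f hf => ?_)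
      (fun g _ => add_tsub_cancel_right g e)
    · rw [mem_coe, hmem] at hf
      have hsub : ∀ i, (f - e) i ≠ 0 → i ∈ s := fun i h => by
        by_contra hi
        simp [e, hi, (hf.2 i).not.2 hi] at h
      rw [mem_coe, mem_piAntidiag, Fintype.sum_subset hsub]
      refine ⟨?_, hsub⟩
      simp [sum_tsub_distrib _ fun i _ => hle f hf.2 i, hf.1, he]
    · rw [mem_coe, mem_piAntidiag, Fintype.sum_subset hg.2] at hg
      rw [mem_coe, hmem]
      refine ⟨by simp [sum_add_distrib, hg.1, he, hs], fun i => ?_⟩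
      by_cases hi : i ∈ s
      · simp [e, hi]
      · simpa [e, hi] using not_imp_comm.1 (hg.2 i) hi
    · rw [mem_coe, hmem] at hf
      exact tsub_add_cancel_of_le (hle f hf.2)
  · rw [Finset.card_eq_zero, filter_eq_empty_iff]
    intro f hf hsupp
    obtain ⟨hsum, hsupp⟩ := (hmem f).1 (mem_filter.2 ⟨hf, hsupp⟩)
    have hcard := sum_le_sum fun i (_ : i ∈ univ) => hle f hsupp i
    rw [he, hsum] at hcard
    exact hs hcard

lemma sum_piAntidiag_apply_card_support (m : ℕ) (g : ℕ → ℕ) :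
    ∑ a ∈ piAntidiag (univ : Finset ι) m, g #{i | a i ≠ 0}
      = ∑ s ∈ range (Fintype.card ι + 1),
          (Fintype.card ι).choose s * ((if s ≤ m then s.multichoose (m - s) else 0) * g s) := by
  calc ∑ a ∈ piAntidiag (univ : Finset ι) m, g #{i | a i ≠ 0}
      = ∑ s ∈ (univ : Finset ι).powerset, (if #s ≤ m then (#s).multichoose (m - #s) else 0) * g #s := by
        rw [← sum_fiberwise_of_maps_to (g := fun a => ({i | a i ≠ 0} : Finset ι))
          (t := univ.powerset) fun a _ => mem_powerset.2 (subset_univ _)]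
        refine sum_congr rfl fun s _ => ?_
        rw [sum_const_nat fun a ha => by rw [(mem_filter.1 ha).2],
          card_filter_piAntidiag_support_eq]
    _ = _ := by
        rw [sum_powerset_apply_card (fun s => (if s ≤ m then s.multichoose (m - s) else 0) * g s),
          card_univ]
        rfl

lemma card_piAntidiag_pairs_disjoint_support (m : ℕ) :
    #{p ∈ piAntidiag (univ : Finset ι) m ×ˢ piAntidiag univ m | ∀ i, p.1 i = 0 ∨ p.2 i = 0}
      = ∑ s ∈ range (Fintype.card ι + 1),
          (Fintype.card ι).choose s * disjointPairsOverSupport (Fintype.card ι) m s := by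
  simp only [disjointPairsOverSupport]
  rw [card_filter, sum_product, ← sum_piAntidiag_apply_card_support]
  refine sum_congr rfl fun a _ => ?_
  have hfiber : {b ∈ piAntidiag (univ : Finset ι) m | ∀ i, a i = 0 ∨ b i = 0}
      = piAntidiag ({i | a i ≠ 0} : Finset ι)ᶜ m := by
    ext b
    have hdisj : (∀ i, a i = 0 ∨ b i = 0) ↔ ∀ i, b i ≠ 0 → i ∈ ({i | a i ≠ 0} : Finset ι)ᶜ := by
      simp only [mem_compl, mem_filter, mem_univ, true_and, not_not]
      exact forall_congr' fun i => or_iff_not_imp_right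
    rw [mem_filter, mem_piAntidiag, mem_piAntidiag, hdisj]
    constructor
    · rintro ⟨⟨hsum, -⟩, hsub⟩
      exact ⟨by rw [Fintype.sum_subset hsub, hsum], hsub⟩
    · rintro ⟨hsum, hsub⟩
      exact ⟨⟨by rwa [← Fintype.sum_subset hsub], fun i _ => mem_univ i⟩, hsub⟩
  rw [← card_filter, hfiber, card_piAntidiag_nat_eq_multichoose, card_compl]

lemma card_piAntidiag_pairs_sum_tsub_eq {n m : ℕ} (hm : m ≤ n) :
    #{p ∈ piAntidiag (univ : Finset ι) n ×ˢ piAntidiag univ n | ∑ i, (p.1 i - p.2 i) = m}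
      = #{p ∈ piAntidiag (univ : Finset ι) m ×ˢ piAntidiag univ m | ∀ i, p.1 i = 0 ∨ p.2 i = 0}
        * (Fintype.card ι).multichoose (n - m) := by
  rw [← card_univ, ← card_piAntidiag_nat_eq_multichoose, ← card_product]
  have hsplit (x y : ι → ℕ) : univ.sum x = univ.sum (x - y) + univ.sum (x ⊓ y) := by
    rw [← sum_add_distrib]
    exact sum_congr rfl fun i _ => by simp
  refine card_nbij' (fun p => ((p.1 - p.2, p.2 - p.1), p.1 ⊓ p.2))
    (fun x => (x.2 + x.1.1, x.2 + x.1.2)) (fun p hp => ?_) (fun x hx => ?_) (fun p _ => ?_)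
    (fun x hx => ?_)
  · simp only [mem_coe, mem_filter, mem_product, mem_piAntidiag, mem_univ, implies_true,
      and_true] at hp ⊢
    obtain ⟨⟨hx, hy⟩, hd⟩ := hp
    change univ.sum (p.1 - p.2) = m at hd
    have h1 := hsplit p.1 p.2
    have h2 := hsplit p.2 p.1
    rw [inf_comm] at h2
    refine ⟨⟨⟨hd, by omega⟩, fun i => by simp only [Pi.sub_apply]; omega⟩, by omega⟩
  · simp only [mem_coe, mem_filter, mem_product, mem_piAntidiag, mem_univ, implies_true,
      and_true] at hx ⊢
    obtain ⟨⟨⟨ha, hb⟩, hdisj⟩, hc⟩ := hx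
    refine ⟨⟨?_, ?_⟩, ?_⟩
    · exact sum_add_distrib.trans (by rw [ha, hc, Nat.sub_add_cancel hm])
    · exact sum_add_distrib.trans (by rw [hb, hc, Nat.sub_add_cancel hm])
    · rw [← ha]
      refine sum_congr rfl fun i _ => ?_
      have := hdisj i
      simp only [Pi.add_apply]
      omega
  · ext i <;> simp only [Pi.add_apply, Pi.sub_apply, Pi.inf_apply] <;> omega
  · simp only [mem_coe, mem_filter, mem_product, mem_piAntidiag, mem_univ, implies_true,
      and_true] at hx
    have hdisj := hx.1.2
    ext i <;> simp only [Pi.add_apply, Pi.sub_apply, Pi.inf_apply] <;> have := hdisj i <;> omega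

end

lemma Nat.multichoose_succ_left (n k : ℕ) : (n + 1).multichoose k = (n + k).choose k := by
  rw [Nat.multichoose_eq, Nat.add_right_comm, Nat.add_sub_cancel]

lemma Nat.cast_multichoose_succ {K : Type*} [Field K] [CharZero K] (n k : ℕ) :
    ((n + 1).multichoose k : K) = (n + k)! / (n ! * k !) := by
  rw [Nat.multichoose_succ_left, add_comm n k, Nat.cast_add_choose, mul_comm]

lemma multichoose_mul_add_multichoose_mul (j a b : ℕ) :
    (j + 1).multichoose (a + 1) * (b + 2).multichoose (j + 1 + (a + 1))
      + (j + 2).multichoose a * (b + 1).multichoose (j + 1 + (a + 1))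
      = (b + 2).multichoose (j + 1) * (j + 1 + (b + 1)).multichoose (a + 1) := by
  suffices h : ((j + 1).multichoose (a + 1) * (b + 2).multichoose (j + 1 + (a + 1))
      + (j + 2).multichoose a * (b + 1).multichoose (j + 1 + (a + 1)) : ℚ)
      = (b + 2).multichoose (j + 1) * (j + 1 + (b + 1)).multichoose (a + 1) by exact_mod_cast h
  rw [show j + 1 + (b + 1) = j + b + 1 + 1 by ring, show j + 1 + (a + 1) = j + a + 1 + 1 by ring]
  simp only [Nat.cast_multichoose_succ]
  rw [show j + (a + 1) = j + a + 1 by ring,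
    show b + 1 + (j + a + 1 + 1) = j + a + b + 2 + 1 by ring,
    show j + 1 + a = j + a + 1 by ring, show b + (j + a + 1 + 1) = j + a + b + 2 by ring,
    show b + 1 + (j + 1) = j + b + 1 + 1 by ring, show j + b + 1 + (a + 1) = j + a + b + 2 by ring,
    Nat.factorial_succ a, Nat.factorial_succ b, Nat.factorial_succ j,
    Nat.factorial_succ (j + a + b + 2), Nat.factorial_succ (j + a + 1),
    Nat.factorial_succ (j + b + 1)]
  push_cast
  field_simp
  ring

lemma disjointPairsOverSupport_add_succ (r m j : ℕ) (hj : j ≤ r) :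
    disjointPairsOverSupport (r + 1) m j + disjointPairsOverSupport (r + 1) m (j + 1)
      = if j ≤ m then r.choose j * r.multichoose (m - j) else 0 := by
  obtain ⟨b, rfl⟩ := Nat.exists_eq_add_of_le hj
  rw [disjointPairsOverSupport, disjointPairsOverSupport, show j + b + 1 - j = b + 1 by omega,
    show j + b + 1 - (j + 1) = b by omega, add_comm j b, ← Nat.multichoose_succ_left, add_comm b j]
  rcases lt_trichotomy m j with hmj | rfl | hjm
  · simp [hmj.not_ge, show ¬ j + 1 ≤ m by omega]
  · simp
  obtain ⟨a, rfl⟩ := Nat.exists_eq_add_of_lt hjm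
  rw [if_pos (by omega), if_pos (by omega), if_pos (by omega),
    show j + a + 1 - j = a + 1 by omega, show j + a + 1 - (j + 1) = a by omega,
    show j + a + 1 = j + (a + 1) by ring]
  rcases j with _ | j
  · simp
  rcases b with _ | b
  · simp [← add_assoc]
  exact multichoose_mul_add_multichoose_mul j a b

lemma sum_choose_mul_disjointPairsOverSupport (k m : ℕ) :
    ∑ s ∈ range (k + 3), (k + 2).choose s * disjointPairsOverSupport (k + 2) m s
      = ∑ j ∈ range (min m (k + 1) + 1), (k + 1).choose j ^ 2 * (m - j + k).choose k := by
  have hpascal := sum_choose_succ_mul (fun s _ => disjointPairsOverSupport (k + 2) m s) (k + 1)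
  simp only [Nat.cast_id] at hpascal
  rw [hpascal, ← sum_add_distrib]
  have hsub : range (min m (k + 1) + 1) ⊆ range (k + 2) := range_subset_range.2 (by omega)
  rw [← sum_subset hsub]
  · refine sum_congr rfl fun j hj => ?_
    have hj : j ≤ min m (k + 1) := Nat.lt_succ_iff.1 (mem_range.1 hj)
    rw [← mul_add, disjointPairsOverSupport_add_succ _ _ _ (by omega), if_pos (by omega),
      Nat.multichoose_succ_left, add_comm k (m - j), Nat.choose_symm_add, sq, mul_assoc]
  · intro j hj hj'
    simp only [mem_range] at hj hj'
    rw [← mul_add, disjointPairsOverSupport_add_succ _ _ _ (by omega), if_neg (by omega), mul_zero]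

/-- Exact pair enumerator: `A_{n,q}(m) = c_{q,m} · binomial (n-m+q-1) (q-1)`,
where `c_{q,m} = Σ_{j=0}^{min(m,q-1)} binomial(q-1,j)² · binomial(m-j+q-2,q-2)`. -/
theorem pair_enumerator (n q m : ℕ) (hq : 2 ≤ q) (hm : m ≤ n) :
    (((simplex n q) ×ˢ (simplex n q)).filter
        (fun p => delDist p.1 p.2 = m)).card
      = (∑ j ∈ Finset.range (min m (q - 1) + 1),
            ((q - 1).choose j) ^ 2 * ((m - j + q - 2).choose (q - 2)))
        * ((n - m + q - 1).choose (q - 1)) := by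
  obtain ⟨k, rfl⟩ : ∃ k, q = k + 2 := ⟨q - 2, by omega⟩
  have hsimplex (n : ℕ) : simplex n (k + 2) = piAntidiag univ n :=
    (piAntidiag_univ_fin_eq_antidiagonalTuple n (k + 2)).symm
  have hshift (j : ℕ) : m - j + (k + 2) - 2 = m - j + k := by omega
  simp only [delDist, hsimplex, hshift, show k + 2 - 1 = k + 1 by omega,
    show k + 2 - 2 = k by omega, show n - m + (k + 2) - 1 = n - m + (k + 1) by omega]
  rw [card_piAntidiag_pairs_sum_tsub_eq hm, card_piAntidiag_pairs_disjoint_support,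
    Fintype.card_fin, sum_choose_mul_disjointPairsOverSupport, Nat.multichoose_succ_left,
    add_comm (k + 1), Nat.choose_symm_add]
end
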